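/- arXiv:1909.03414 — 5 statements merged into one kernel-verified Lean document; each statement's English description precedes it below -/
import Mathlib

section
/- Let K be a clique cutset of a weighted graph G, with V(G) partitioned into K, A, B where A is anticomplete to B. Then W(G) = W(G[A]) \cdot W(G[B \cup K]) where each vertex v \in K is given the modified weight w(v) \cdot W(G[A \setminus N(v)]) / W(G[A]) in G[B \cup K] (assuming W(G[A]) > 0, e.g. all weights nonnegative). -/
open scoped Classical

/-- Total weight of independent sets of `G` contained in the vertex subset `U`
(i.e. of the induced subgraph `G[U]`), with vertex weights `w`. -/
noncomputable def indepWeightOn {V : Type*} [Fintype V]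
    (G : SimpleGraph V) (U : Set V) (w : V → ℚ) : ℚ :=
  ∑ S ∈ Finset.univ.filter
      (fun S : Finset V => ↑S ⊆ U ∧ ∀ u ∈ S, ∀ v ∈ S, ¬ G.Adj u v),
    ∏ v ∈ S, w v

lemma indepWeightOn_pos {V : Type*} [Fintype V] (G : SimpleGraph V) (U : Set V)
    (w : V → ℚ) (hw : ∀ v, 0 < w v) : 0 < indepWeightOn G U w := by
  unfold indepWeightOn
  apply Finset.sum_pos'
  · intro S _
    exact Finset.prod_nonneg fun v _ => (hw v).le
  · exact ⟨∅, by simp, by simp⟩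

/-- Let `K` be a clique cutset of a weighted graph `G`, with `V(G)` partitioned into
`K, A, B` where `A` is anticomplete to `B`. Then `W(G) = W(G[A]) · W'(G[B ∪ K])`, where
in `G[B ∪ K]` each vertex `v ∈ K` gets the modified weight
`w(v) · W(G[A \ N(v)]) / W(G[A])` (the weights of vertices of `B` are unchanged). -/
theorem cliqueCutset_weight {V : Type*} [Fintype V]
    (G : SimpleGraph V) (w : V → ℚ) (hw : ∀ v, 0 < w v)
    (K A B : Set V)
    (hcover : K ∪ A ∪ B = Set.univ)
    (hKA : Disjoint K A) (hKB : Disjoint K B) (hAB : Disjoint A B)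
    (hK : G.IsClique K)
    (hAne : A.Nonempty) (hBne : B.Nonempty)
    (hanti : ∀ a ∈ A, ∀ b ∈ B, ¬ G.Adj a b) :
    indepWeightOn G Set.univ w =
      indepWeightOn G A w *
        indepWeightOn G (B ∪ K)
          (fun v => if v ∈ K then
              w v * indepWeightOn G (A \ G.neighborSet v) w / indepWeightOn G A w
            else w v) := by
  classical
  set w' : V → ℚ := fun v => if v ∈ K then
      w v * indepWeightOn G (A \ G.neighborSet v) w / indepWeightOn G A w
    else w v with hw'def
  have hApos : 0 < indepWeightOn G A w := indepWeightOn_pos G A w hw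
  set I : Set V → Finset (Finset V) := fun U => Finset.univ.filter
      (fun S : Finset V => ↑S ⊆ U ∧ ∀ u ∈ S, ∀ v ∈ S, ¬ G.Adj u v) with hI
  have hIW : ∀ U (ω : V → ℚ), indepWeightOn G U ω = ∑ S ∈ I U, ∏ v ∈ S, ω v :=
    fun U ω => rfl
  have hImem : ∀ (U : Set V) (S : Finset V),
      S ∈ I U ↔ ((↑S : Set V) ⊆ U ∧ ∀ u ∈ S, ∀ v ∈ S, ¬ G.Adj u v) := by
    intro U S; simp [hI]
  set NT : Finset V → Set V := fun T => {a | a ∈ A ∧ ∀ v ∈ T, ¬ G.Adj v a} with hNT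
  have hAnotBK : ∀ x ∈ A, x ∉ B ∪ K := by
    intro x hx hmem
    rcases hmem with h | h
    · exact Set.disjoint_left.mp hAB hx h
    · exact Set.disjoint_left.mp hKA.symm hx h
  -- claim 2
  have claim2 : ∀ T ∈ I (B ∪ K),
      indepWeightOn G A w * ∏ v ∈ T, w' v
        = (∏ v ∈ T, w v) * indepWeightOn G (NT T) w := by
    intro T hT
    rw [hImem] at hT
    obtain ⟨hTsub, hTind⟩ := hT
    set TK : Finset V := T.filter (fun v => v ∈ K) with hTK
    have hTKcard : TK.card ≤ 1 := by
      by_contra h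
      push_neg at h
      obtain ⟨u, hu, v, hv, huv⟩ := Finset.one_lt_card.mp h
      rw [hTK, Finset.mem_filter] at hu hv
      exact hTind u hu.1 v hv.1 (hK hu.2 hv.2 huv)
    rcases TK.eq_empty_or_nonempty with hE | hNe
    · -- no vertex of K in T
      have hTB : ∀ v ∈ T, v ∉ K := by
        intro v hv hvK
        have : v ∈ TK := by rw [hTK, Finset.mem_filter]; exact ⟨hv, hvK⟩
        simp [hE] at this
      have hTB' : ∀ v ∈ T, v ∈ B := by
        intro v hv
        rcases hTsub hv with h | h
        · exact h
        · exact absurd h (hTB v hv)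
      have h1 : ∏ v ∈ T, w' v = ∏ v ∈ T, w v :=
        Finset.prod_congr rfl fun v hv => by
          rw [hw'def]; exact if_neg (hTB v hv)
      have h2 : NT T = A := by
        ext a
        simp only [hNT, Set.mem_setOf_eq]
        constructor
        · exact fun h => h.1
        · intro ha
          refine ⟨ha, fun v hv hadj => ?_⟩
          exact hanti a ha v (hTB' v hv) hadj.symm
      rw [h1, h2, mul_comm]
    · obtain ⟨v₀, hv₀⟩ := Finset.card_eq_one.mp (le_antisymm hTKcard hNe.card_pos)
      have hv₀T : v₀ ∈ T := by
        have : v₀ ∈ TK := by rw [hv₀]; exact Finset.mem_singleton_self v₀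
        rw [hTK, Finset.mem_filter] at this; exact this.1
      have hv₀K : v₀ ∈ K := by
        have : v₀ ∈ TK := by rw [hv₀]; exact Finset.mem_singleton_self v₀
        rw [hTK, Finset.mem_filter] at this; exact this.2
      have hrest : ∀ x ∈ T.erase v₀, x ∈ B ∧ x ∉ K := by
        intro x hx
        have hxT := Finset.mem_of_mem_erase hx
        have hxne := Finset.ne_of_mem_erase hx
        have hxK : x ∉ K := by
          intro hxK
          have : x ∈ TK := by rw [hTK, Finset.mem_filter]; exact ⟨hxT, hxK⟩
          rw [hv₀, Finset.mem_singleton] at this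
          exact hxne this
        refine ⟨?_, hxK⟩
        rcases hTsub hxT with h | h
        · exact h
        · exact absurd h hxK
      have h1 : ∏ v ∈ T, w' v
          = (w v₀ * indepWeightOn G (A \ G.neighborSet v₀) w / indepWeightOn G A w)
            * ∏ x ∈ T.erase v₀, w x := by
        rw [← Finset.mul_prod_erase T w' hv₀T]
        congr 1
        · rw [hw'def]; exact if_pos hv₀K
        · exact Finset.prod_congr rfl fun x hx => by
            rw [hw'def]; exact if_neg (hrest x hx).2
      have h2 : ∏ v ∈ T, w v = w v₀ * ∏ x ∈ T.erase v₀, w x :=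
        (Finset.mul_prod_erase T w hv₀T).symm
      have h3 : NT T = A \ G.neighborSet v₀ := by
        ext a
        simp only [hNT, Set.mem_setOf_eq, Set.mem_diff, SimpleGraph.mem_neighborSet]
        constructor
        · exact fun h => ⟨h.1, h.2 v₀ hv₀T⟩
        · rintro ⟨ha, hna⟩
          refine ⟨ha, fun u hu hadj => ?_⟩
          by_cases huK : u ∈ K
          · have : u ∈ TK := by rw [hTK, Finset.mem_filter]; exact ⟨hu, huK⟩
            rw [hv₀, Finset.mem_singleton] at this
            exact hna (this ▸ hadj)
          · have huB : u ∈ B := by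
              rcases hTsub hu with h | h
              · exact h
              · exact absurd h huK
            exact hanti a ha u huB hadj.symm
      rw [h1, h2, h3]
      field_simp
  -- claim 1
  have hdisjTS : ∀ (T S : Finset V), (↑T : Set V) ⊆ B ∪ K → (↑S : Set V) ⊆ A →
      Disjoint T S := by
    intro T S hT hS
    rw [Finset.disjoint_left]
    intro x hxT hxS
    exact hAnotBK x (hS hxS) (hT hxT)
  have claim1 : indepWeightOn G Set.univ w
      = ∑ T ∈ I (B ∪ K), (∏ v ∈ T, w v) * indepWeightOn G (NT T) w := by
    have step : ∀ T ∈ I (B ∪ K), (∏ v ∈ T, w v) * indepWeightOn G (NT T) w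
        = ∑ S ∈ I (NT T), ∏ v ∈ T ∪ S, w v := by
      intro T hT
      rw [hImem] at hT
      rw [hIW, Finset.mul_sum]
      refine Finset.sum_congr rfl fun S hS => ?_
      rw [hImem] at hS
      have hSA : (↑S : Set V) ⊆ A := fun x hx => (hS.1 hx).1
      rw [Finset.prod_union (hdisjTS T S hT.1 hSA)]
    rw [Finset.sum_congr rfl step, hIW]
    rw [Finset.sum_sigma']
    refine (Finset.sum_nbij' (i := fun S => (⟨S.filter (fun x => x ∈ B ∪ K), S.filter (fun x => x ∈ A)⟩ : (_ : Finset V) × Finset V))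
      (j := fun p => p.1 ∪ p.2) ?_ ?_ ?_ ?_ ?_)
    · -- hi
      intro S hS
      rw [hImem] at hS
      rw [Finset.mem_sigma]
      constructor
      · rw [hImem]
        refine ⟨?_, ?_⟩
        · intro x hx
          simp only [Finset.coe_filter, Set.mem_setOf_eq] at hx
          exact hx.2
        · intro u hu v hv
          rw [Finset.mem_filter] at hu hv
          exact hS.2 u hu.1 v hv.1
      · rw [hImem]
        refine ⟨?_, ?_⟩
        · intro a ha
          simp only [Finset.coe_filter, Set.mem_setOf_eq] at ha
          refine Set.mem_setOf_eq ▸ ⟨ha.2, ?_⟩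
          intro v hv
          rw [Finset.mem_filter] at hv
          exact hS.2 v hv.1 a ha.1
        · intro u hu v hv
          rw [Finset.mem_filter] at hu hv
          exact hS.2 u hu.1 v hv.1
    · -- hj
      intro p hp
      rw [Finset.mem_sigma] at hp
      obtain ⟨hp1, hp2⟩ := hp
      rw [hImem] at hp1 hp2
      rw [hImem]
      have hp2A : (↑p.2 : Set V) ⊆ A := fun x hx => (hp2.1 hx).1
      refine ⟨fun x _ => Set.mem_univ x, ?_⟩
      intro u hu v hv hadj
      rw [Finset.mem_union] at hu hv
      rcases hu with hu | hu <;> rcases hv with hv | hv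
      · exact hp1.2 u hu v hv hadj
      · exact (hp2.1 hv).2 u hu hadj
      · exact (hp2.1 hu).2 v hv hadj.symm
      · exact hp2.2 u hu v hv hadj
    · -- left inv
      intro S hS
      rw [hImem] at hS
      have : S.filter (fun x => x ∈ B ∪ K) ∪ S.filter (fun x => x ∈ A) = S := by
        rw [← Finset.filter_or]
        rw [Finset.filter_true_of_mem]
        intro x hx
        have hx' : x ∈ K ∪ A ∪ B := hcover ▸ Set.mem_univ x
        rcases hx' with (h | h) | h
        · exact Or.inl (Or.inr h)
        · exact Or.inr h
        · exact Or.inl (Or.inl h)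
      exact this
    · -- right inv
      intro p hp
      rw [Finset.mem_sigma] at hp
      obtain ⟨hp1, hp2⟩ := hp
      rw [hImem] at hp1 hp2
      have hp2A : (↑p.2 : Set V) ⊆ A := fun x hx => (hp2.1 hx).1
      have e1 : (p.1 ∪ p.2).filter (fun x => x ∈ B ∪ K) = p.1 := by
        ext x
        rw [Finset.mem_filter, Finset.mem_union]
        constructor
        · rintro ⟨hx | hx, hxBK⟩
          · exact hx
          · exact absurd hxBK (hAnotBK x (hp2A hx))
        · exact fun hx => ⟨Or.inl hx, hp1.1 hx⟩
      have e2 : (p.1 ∪ p.2).filter (fun x => x ∈ A) = p.2 := by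
        ext x
        rw [Finset.mem_filter, Finset.mem_union]
        constructor
        · rintro ⟨hx | hx, hxA⟩
          · exact absurd (hp1.1 hx) (hAnotBK x hxA)
          · exact hx
        · exact fun hx => ⟨Or.inr hx, hp2A hx⟩
      obtain ⟨p1, p2⟩ := p
      simp only at e1 e2 ⊢
      rw [e1, e2]
    · -- values
      intro S hS
      rw [hImem] at hS
      simp only
      congr 1
      rw [← Finset.filter_or, Finset.filter_true_of_mem]
      intro x hx
      have hx' : x ∈ K ∪ A ∪ B := hcover ▸ Set.mem_univ x
      rcases hx' with (h | h) | h
      · exact Or.inl (Or.inr h)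
      · exact Or.inr h
      · exact Or.inl (Or.inl h)
  -- assemble
  rw [claim1, hIW (B ∪ K) w', Finset.mul_sum]
  exact (Finset.sum_congr rfl claim2).symm
end

section
/- Every peculiar graph G has independence number \alpha(G) = 3, and every independent set of size three in G has exactly one vertex in each of the cliques K_1, K_2, K_3. -/
/-- `Peculiar G A₁ A₂ A₃ B₁ B₂ B₃ K₁ K₂ K₃` says that the graph `G` is a peculiar graph
(in the sense of Chvátal and Sbihi) with the indicated construction data: the nine nonempty
sets partition the vertices; `K = A₁ ∪ A₂ ∪ A₃ ∪ B₁ ∪ B₂ ∪ B₃` is a clique from which at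
least one edge between `A₁,B₂`, between `A₂,B₃` and between `A₃,B₁` has been removed (and
only such edges may be missing); `K₁,K₂,K₃` are cliques, pairwise anticomplete, and each
vertex of `Kᵢ` is adjacent exactly to the vertices of `K \ (Aᵢ ∪ Bᵢ)` among `K`. -/
structure Peculiar {V : Type*} [Fintype V] [DecidableEq V] (G : SimpleGraph V)
    (A₁ A₂ A₃ B₁ B₂ B₃ K₁ K₂ K₃ : Finset V) : Prop where
  nA₁ : A₁.Nonempty
  nA₂ : A₂.Nonempty
  nA₃ : A₃.Nonempty
  nB₁ : B₁.Nonempty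
  nB₂ : B₂.Nonempty
  nB₃ : B₃.Nonempty
  nK₁ : K₁.Nonempty
  nK₂ : K₂.Nonempty
  nK₃ : K₃.Nonempty
  disj : ([A₁, A₂, A₃, B₁, B₂, B₃, K₁, K₂, K₃] : List (Finset V)).Pairwise Disjoint
  cover : A₁ ∪ A₂ ∪ A₃ ∪ B₁ ∪ B₂ ∪ B₃ ∪ K₁ ∪ K₂ ∪ K₃ = Finset.univ
  /-- inside `K`, only pairs from `(A₁,B₂)`, `(A₂,B₃)`, `(A₃,B₁)` may be non-adjacent -/
  Kadj : ∀ u ∈ A₁ ∪ A₂ ∪ A₃ ∪ B₁ ∪ B₂ ∪ B₃, ∀ v ∈ A₁ ∪ A₂ ∪ A₃ ∪ B₁ ∪ B₂ ∪ B₃,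
    u ≠ v → ¬ G.Adj u v →
      ((u ∈ A₁ ∧ v ∈ B₂) ∨ (v ∈ A₁ ∧ u ∈ B₂) ∨ (u ∈ A₂ ∧ v ∈ B₃) ∨ (v ∈ A₂ ∧ u ∈ B₃) ∨
        (u ∈ A₃ ∧ v ∈ B₁) ∨ (v ∈ A₃ ∧ u ∈ B₁))
  missing₁ : ∃ u ∈ A₁, ∃ v ∈ B₂, ¬ G.Adj u v
  missing₂ : ∃ u ∈ A₂, ∃ v ∈ B₃, ¬ G.Adj u v
  missing₃ : ∃ u ∈ A₃, ∃ v ∈ B₁, ¬ G.Adj u v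
  cliqueK₁ : G.IsClique ↑K₁
  cliqueK₂ : G.IsClique ↑K₂
  cliqueK₃ : G.IsClique ↑K₃
  adjK₁ : ∀ u ∈ K₁, ∀ v ∈ A₁ ∪ A₂ ∪ A₃ ∪ B₁ ∪ B₂ ∪ B₃, (G.Adj u v ↔ v ∉ A₁ ∪ B₁)
  adjK₂ : ∀ u ∈ K₂, ∀ v ∈ A₁ ∪ A₂ ∪ A₃ ∪ B₁ ∪ B₂ ∪ B₃, (G.Adj u v ↔ v ∉ A₂ ∪ B₂)
  adjK₃ : ∀ u ∈ K₃, ∀ v ∈ A₁ ∪ A₂ ∪ A₃ ∪ B₁ ∪ B₂ ∪ B₃, (G.Adj u v ↔ v ∉ A₃ ∪ B₃)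
  antiK₁₂ : ∀ u ∈ K₁, ∀ v ∈ K₂, ¬ G.Adj u v
  antiK₁₃ : ∀ u ∈ K₁, ∀ v ∈ K₃, ¬ G.Adj u v
  antiK₂₃ : ∀ u ∈ K₂, ∀ v ∈ K₃, ¬ G.Adj u v

/-!
Each vertex lies in one of nine parts `A₁, …, K₃`, and two distinct non-adjacent vertices can
only lie in parts that are adjacent in a fixed graph on the nine parts. That graph has a single
triangle, `K₁K₂K₃`, so all vertices of an independent set of size at least three lie in
`K₁ ∪ K₂ ∪ K₃`; as each `Kᵢ` is a clique, such a set has at most one vertex in each `Kᵢ`.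
-/

namespace SimpleGraph

variable {V : Type*} {G : SimpleGraph V}

theorem isIndepSet_coe_iff {S : Finset V} :
    G.IsIndepSet (S : Set V) ↔ ∀ u ∈ S, ∀ v ∈ S, ¬ G.Adj u v :=
  ⟨fun hS _ hu _ hv huv ↦ hS hu hv (G.ne_of_adj huv) huv, fun hS _ hu _ hv _ ↦ hS _ hu _ hv⟩

theorem IsIndepSet.card_inter_le_one [DecidableEq V] {S C : Finset V}
    (hS : G.IsIndepSet (S : Set V)) (hC : G.IsClique (C : Set V)) : (S ∩ C).card ≤ 1 := by
  refine Finset.card_le_one.mpr fun u hu v hv ↦ ?_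
  rw [Finset.mem_inter] at hu hv
  by_contra huv
  exact hS hu.1 hv.1 huv (hC hu.2 hv.2 huv)

end SimpleGraph

inductive PeculiarPart
  | a₁ | a₂ | a₃ | b₁ | b₂ | b₃ | k₁ | k₂ | k₃
  deriving DecidableEq

namespace PeculiarPart

instance : Fintype PeculiarPart where
  elems := {a₁, a₂, a₃, b₁, b₂, b₃, k₁, k₂, k₃}
  complete p := by cases p <;> decide

/-- Two parts are adjacent when a peculiar graph may have a non-edge between them. -/
def pattern : SimpleGraph PeculiarPart :=
  SimpleGraph.fromEdgeSet {s(a₁, b₂), s(a₂, b₃), s(a₃, b₁), s(k₁, a₁), s(k₁, b₁), s(k₂, a₂),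
    s(k₂, b₂), s(k₃, a₃), s(k₃, b₃), s(k₁, k₂), s(k₁, k₃), s(k₂, k₃)}

instance : DecidableRel pattern.Adj := fun _ _ ↦ by
  unfold pattern; infer_instance

theorem eq_k_of_pattern_triangle {p q r : PeculiarPart} (hpq : pattern.Adj p q)
    (hpr : pattern.Adj p r) (hqr : pattern.Adj q r) : p = k₁ ∨ p = k₂ ∨ p = k₃ := by
  revert p q r; decide

end PeculiarPart

open Function PeculiarPart

namespace Peculiar

variable {V : Type*} [Fintype V] [DecidableEq V] {G : SimpleGraph V}
  {A₁ A₂ A₃ B₁ B₂ B₃ K₁ K₂ K₃ : Finset V} (h : Peculiar G A₁ A₂ A₃ B₁ B₂ B₃ K₁ K₂ K₃)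
include h

omit h in
def parts (_ : Peculiar G A₁ A₂ A₃ B₁ B₂ B₃ K₁ K₂ K₃) : PeculiarPart → Finset V
  | a₁ => A₁ | a₂ => A₂ | a₃ => A₃ | b₁ => B₁ | b₂ => B₂ | b₃ => B₃ | k₁ => K₁ | k₂ => K₂
  | k₃ => K₃

theorem pairwise_disjoint_parts : Pairwise (Disjoint on h.parts) := by
  have hl : [a₁, a₂, a₃, b₁, b₂, b₃, k₁, k₂, k₃].Pairwise (Disjoint on h.parts) :=
    (List.pairwise_map (f := h.parts)).mp h.disj
  have : Std.Symm (Disjoint on h.parts) := ⟨fun _ _ hpq ↦ hpq.symm⟩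
  intro p q hpq
  exact hl.forall (by cases p <;> simp) (by cases q <;> simp) hpq

theorem exists_mem_parts (v : V) : ∃ p, v ∈ h.parts p := by
  have hv : v ∈ A₁ ∪ A₂ ∪ A₃ ∪ B₁ ∪ B₂ ∪ B₃ ∪ K₁ ∪ K₂ ∪ K₃ := h.cover ▸ Finset.mem_univ v
  simp only [Finset.mem_union] at hv
  rcases hv with ((((((((hv | hv) | hv) | hv) | hv) | hv) | hv) | hv) | hv)
  exacts [⟨a₁, hv⟩, ⟨a₂, hv⟩, ⟨a₃, hv⟩, ⟨b₁, hv⟩, ⟨b₂, hv⟩, ⟨b₃, hv⟩, ⟨k₁, hv⟩, ⟨k₂, hv⟩,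
    ⟨k₃, hv⟩]

noncomputable def part (v : V) : PeculiarPart := (h.exists_mem_parts v).choose

theorem mem_parts_part (v : V) : v ∈ h.parts (h.part v) := (h.exists_mem_parts v).choose_spec

theorem part_eq_of_mem (p : PeculiarPart) {v : V} (hv : v ∈ h.parts p) : h.part v = p := by
  by_contra hne
  exact Finset.disjoint_left.mp (h.pairwise_disjoint_parts hne) (h.mem_parts_part v) hv

theorem mem_center_or_mem_cliques (v : V) :
    v ∈ A₁ ∪ A₂ ∪ A₃ ∪ B₁ ∪ B₂ ∪ B₃ ∨ v ∈ K₁ ∨ v ∈ K₂ ∨ v ∈ K₃ := by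
  have hv : v ∈ A₁ ∪ A₂ ∪ A₃ ∪ B₁ ∪ B₂ ∪ B₃ ∪ K₁ ∪ K₂ ∪ K₃ := h.cover ▸ Finset.mem_univ v
  simpa only [Finset.mem_union, or_assoc] using hv

variable {u v : V}

theorem pattern_adj_part_of_mem_center (hu : u ∈ A₁ ∪ A₂ ∪ A₃ ∪ B₁ ∪ B₂ ∪ B₃)
    (hv : v ∈ A₁ ∪ A₂ ∪ A₃ ∪ B₁ ∪ B₂ ∪ B₃) (huv : u ≠ v) (hnadj : ¬ G.Adj u v) :
    pattern.Adj (h.part u) (h.part v) := by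
  rcases h.Kadj u hu v hv huv hnadj with
    ⟨hu, hv⟩ | ⟨hv, hu⟩ | ⟨hu, hv⟩ | ⟨hv, hu⟩ | ⟨hu, hv⟩ | ⟨hv, hu⟩
  · rw [h.part_eq_of_mem a₁ hu, h.part_eq_of_mem b₂ hv]; decide
  · rw [h.part_eq_of_mem b₂ hu, h.part_eq_of_mem a₁ hv]; decide
  · rw [h.part_eq_of_mem a₂ hu, h.part_eq_of_mem b₃ hv]; decide
  · rw [h.part_eq_of_mem b₃ hu, h.part_eq_of_mem a₂ hv]; decide
  · rw [h.part_eq_of_mem a₃ hu, h.part_eq_of_mem b₁ hv]; decide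
  · rw [h.part_eq_of_mem b₁ hu, h.part_eq_of_mem a₃ hv]; decide

theorem pattern_adj_part_of_mem_clique_center (hu : u ∈ K₁ ∨ u ∈ K₂ ∨ u ∈ K₃)
    (hv : v ∈ A₁ ∪ A₂ ∪ A₃ ∪ B₁ ∪ B₂ ∪ B₃) (hnadj : ¬ G.Adj u v) :
    pattern.Adj (h.part u) (h.part v) := by
  rcases hu with hu | hu | hu
  · rw [h.adjK₁ u hu v hv, not_not, Finset.mem_union] at hnadj
    rw [h.part_eq_of_mem k₁ hu]
    rcases hnadj with hv | hv
    · rw [h.part_eq_of_mem a₁ hv]; decide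
    · rw [h.part_eq_of_mem b₁ hv]; decide
  · rw [h.adjK₂ u hu v hv, not_not, Finset.mem_union] at hnadj
    rw [h.part_eq_of_mem k₂ hu]
    rcases hnadj with hv | hv
    · rw [h.part_eq_of_mem a₂ hv]; decide
    · rw [h.part_eq_of_mem b₂ hv]; decide
  · rw [h.adjK₃ u hu v hv, not_not, Finset.mem_union] at hnadj
    rw [h.part_eq_of_mem k₃ hu]
    rcases hnadj with hv | hv
    · rw [h.part_eq_of_mem a₃ hv]; decide
    · rw [h.part_eq_of_mem b₃ hv]; decide

theorem pattern_adj_part_of_mem_cliques (hu : u ∈ K₁ ∨ u ∈ K₂ ∨ u ∈ K₃)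
    (hv : v ∈ K₁ ∨ v ∈ K₂ ∨ v ∈ K₃) (huv : u ≠ v) (hnadj : ¬ G.Adj u v) :
    pattern.Adj (h.part u) (h.part v) := by
  rcases hu with hu | hu | hu <;> rcases hv with hv | hv | hv
  · exact absurd (h.cliqueK₁ hu hv huv) hnadj
  · rw [h.part_eq_of_mem k₁ hu, h.part_eq_of_mem k₂ hv]; decide
  · rw [h.part_eq_of_mem k₁ hu, h.part_eq_of_mem k₃ hv]; decide
  · rw [h.part_eq_of_mem k₂ hu, h.part_eq_of_mem k₁ hv]; decide
  · exact absurd (h.cliqueK₂ hu hv huv) hnadj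
  · rw [h.part_eq_of_mem k₂ hu, h.part_eq_of_mem k₃ hv]; decide
  · rw [h.part_eq_of_mem k₃ hu, h.part_eq_of_mem k₁ hv]; decide
  · rw [h.part_eq_of_mem k₃ hu, h.part_eq_of_mem k₂ hv]; decide
  · exact absurd (h.cliqueK₃ hu hv huv) hnadj

theorem pattern_adj_part (huv : u ≠ v) (hnadj : ¬ G.Adj u v) :
    pattern.Adj (h.part u) (h.part v) := by
  rcases h.mem_center_or_mem_cliques u with hu | hu <;>
    rcases h.mem_center_or_mem_cliques v with hv | hv
  · exact h.pattern_adj_part_of_mem_center hu hv huv hnadj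
  · exact (h.pattern_adj_part_of_mem_clique_center hv hu (by rwa [G.adj_comm])).symm
  · exact h.pattern_adj_part_of_mem_clique_center hu hv hnadj
  · exact h.pattern_adj_part_of_mem_cliques hu hv huv hnadj

theorem subset_cliques_of_isIndepSet {S : Finset V} (hS : G.IsIndepSet (S : Set V))
    (hcard : 2 < S.card) : S ⊆ K₁ ∪ K₂ ∪ K₃ := by
  intro v hv
  obtain ⟨u, hu, w, hw, huw⟩ := Finset.one_lt_card.mp
    (show 1 < (S.erase v).card by rw [Finset.card_erase_of_mem hv]; omega)
  rw [Finset.mem_erase] at hu hw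
  have hpart := eq_k_of_pattern_triangle
    (h.pattern_adj_part hu.1.symm (hS hv hu.2 hu.1.symm))
    (h.pattern_adj_part hw.1.symm (hS hv hw.2 hw.1.symm))
    (h.pattern_adj_part huw (hS hu.2 hw.2 huw))
  have hv := h.mem_parts_part v
  simp only [Finset.mem_union]
  rcases hpart with hpart | hpart | hpart <;> rw [hpart] at hv
  exacts [Or.inl (Or.inl hv), Or.inl (Or.inr hv), Or.inr hv]

theorem card_le_sum_card_inter_cliques {S : Finset V} (hS : G.IsIndepSet (S : Set V))
    (hcard : 2 < S.card) : S.card ≤ (S ∩ K₁).card + (S ∩ K₂).card + (S ∩ K₃).card := by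
  calc S.card = (S ∩ K₁ ∪ S ∩ K₂ ∪ S ∩ K₃).card := by
        rw [← Finset.inter_union_distrib_left, ← Finset.inter_union_distrib_left,
          Finset.inter_eq_left.mpr (h.subset_cliques_of_isIndepSet hS hcard)]
    _ ≤ (S ∩ K₁ ∪ S ∩ K₂).card + (S ∩ K₃).card := Finset.card_union_le _ _
    _ ≤ (S ∩ K₁).card + (S ∩ K₂).card + (S ∩ K₃).card := by
        gcongr; exact Finset.card_union_le _ _

theorem exists_isNIndepSet_three : ∃ S : Finset V, G.IsNIndepSet 3 S := by
  obtain ⟨x₁, hx₁⟩ := h.nK₁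
  obtain ⟨x₂, hx₂⟩ := h.nK₂
  obtain ⟨x₃, hx₃⟩ := h.nK₃
  have hne {p q : PeculiarPart} {x y : V} (hx : x ∈ h.parts p) (hy : y ∈ h.parts q)
      (hpq : p ≠ q) : x ≠ y :=
    Finset.disjoint_iff_ne.mp (h.pairwise_disjoint_parts hpq) _ hx _ hy
  refine ⟨{x₁, x₂, x₃}, G.isNClique_compl.mp ?_⟩
  refine ((SimpleGraph.isNClique_one.mpr ⟨x₃, rfl⟩).insert ?_).insert ?_
  · simpa using ⟨hne (p := k₂) (q := k₃) hx₂ hx₃ (by decide), h.antiK₂₃ x₂ hx₂ x₃ hx₃⟩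
  · simpa using ⟨⟨hne (p := k₁) (q := k₂) hx₁ hx₂ (by decide), h.antiK₁₂ x₁ hx₁ x₂ hx₂⟩,
      hne (p := k₁) (q := k₃) hx₁ hx₃ (by decide), h.antiK₁₃ x₁ hx₁ x₃ hx₃⟩

end Peculiar

/-- A peculiar graph `G` has independence number `α(G) = 3`, and any independent set of
size three has exactly one vertex in each of `K₁, K₂, K₃`. -/
theorem peculiar_independence_number {V : Type*} [Fintype V] [DecidableEq V]
    (G : SimpleGraph V) (A₁ A₂ A₃ B₁ B₂ B₃ K₁ K₂ K₃ : Finset V)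
    (h : Peculiar G A₁ A₂ A₃ B₁ B₂ B₃ K₁ K₂ K₃) :
    (∃ S : Finset V, (∀ u ∈ S, ∀ v ∈ S, ¬ G.Adj u v) ∧ S.card = 3) ∧
    (∀ S : Finset V, (∀ u ∈ S, ∀ v ∈ S, ¬ G.Adj u v) → S.card ≤ 3) ∧
    (∀ S : Finset V, (∀ u ∈ S, ∀ v ∈ S, ¬ G.Adj u v) → S.card = 3 →
      (S ∩ K₁).card = 1 ∧ (S ∩ K₂).card = 1 ∧ (S ∩ K₃).card = 1) := by
  have bounds {S : Finset V} (hS : G.IsIndepSet (S : Set V)) (hcard : 2 < S.card) :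
      S.card ≤ (S ∩ K₁).card + (S ∩ K₂).card + (S ∩ K₃).card ∧
        (S ∩ K₁).card ≤ 1 ∧ (S ∩ K₂).card ≤ 1 ∧ (S ∩ K₃).card ≤ 1 :=
    ⟨h.card_le_sum_card_inter_cliques hS hcard, hS.card_inter_le_one h.cliqueK₁,
      hS.card_inter_le_one h.cliqueK₂, hS.card_inter_le_one h.cliqueK₃⟩
  refine ⟨?_, fun S hS ↦ ?_, fun S hS hcard ↦ ?_⟩
  · obtain ⟨S, hS⟩ := h.exists_isNIndepSet_three
    exact ⟨S, SimpleGraph.isIndepSet_coe_iff.mp hS.isIndepSet, hS.card_eq⟩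
  · by_contra! hcard
    have := bounds (SimpleGraph.isIndepSet_coe_iff.mpr hS) (by omega)
    omega
  · have := bounds (SimpleGraph.isIndepSet_coe_iff.mpr hS) (by omega)
    omega
end

section
/- Let Z be the cobipartite augment on cliques X, Y with connecting edge set F, and define W_1(X) = \sum_{v\in X} w(v), W_1(Y) = \sum_{v\in Y} w(v), W_2(Z) = \sum_{uv \notin F, u\in X, v\in Y} w(u)w(v). Let Z' be the 4-vertex gadget on X' = {x_1, x_2}, Y' = {y_1, y_2} with edges x_1x_2, y_1y_2, x_1y_1, x_2y_2 and weights w(x_1)=\rho, w(x_2)=W_1(X)-\rho, w(y_1)=\sigma, w(y_2)=W_1(Y)-\sigma, where 2\sigma < W_1(Y) and \rho = (W_2(Z) - \sigma W_1(X)) / (W_1(Y) - 2\sigma). Then W_1(X') = W_1(X), W_1(Y') = W_1(Y), and the total weight of independent sets of Z' of size 2 equals W_2(Z). -/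
/-- `r (b - s) + (a - r) s = r (b - 2s) + a s` is affine in `r`, and the hypothesis solves it
for the value `W`. -/
theorem mul_sub_add_sub_mul_eq_of_eq_div {K : Type*} [Field K] {a b r s W : K}
    (hb : b - 2 * s ≠ 0) (hr : r = (W - s * a) / (b - 2 * s)) :
    r * (b - s) + (a - r) * s = W := by
  have hsolve : r * (b - 2 * s) = W - s * a := by rw [hr, div_mul_cancel₀ _ hb]
  linear_combination hsolve

theorem augment_gadget_equivalent_general {V : Type*} [DecidableEq V]
    (w : V → ℚ)
    (X Y : Finset V)
    (F : Finset (V × V))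
    (σ ρ : ℚ)
    (hσY : 2 * σ < ∑ v ∈ Y, w v)
    (hρ : ρ = ((∑ p ∈ (X ×ˢ Y).filter (fun p => p ∉ F), w p.1 * w p.2) -
        σ * ∑ v ∈ X, w v) / ((∑ v ∈ Y, w v) - 2 * σ)) :
    ρ + ((∑ v ∈ X, w v) - ρ) = ∑ v ∈ X, w v ∧
    σ + ((∑ v ∈ Y, w v) - σ) = ∑ v ∈ Y, w v ∧
    ρ * ((∑ v ∈ Y, w v) - σ) + ((∑ v ∈ X, w v) - ρ) * σ =
      ∑ p ∈ (X ×ˢ Y).filter (fun p => p ∉ F), w p.1 * w p.2 :=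
  ⟨add_sub_cancel ρ _, add_sub_cancel σ _,
    mul_sub_add_sub_mul_eq_of_eq_div (sub_ne_zero.mpr hσY.ne') hρ⟩

/-- The gadget replacing a cobipartite augment. `Z = X ∪ Y` is an augment: `X`, `Y` are
cliques with connecting edge set `F ⊆ X × Y`, and nonnegative vertex weights `w`. Writing
`W₁(X) = ∑_{v∈X} w v`, `W₁(Y) = ∑_{v∈Y} w v` and
`W₂(Z) = ∑_{(u,v) ∈ (X×Y)\F} w u * w v`, the gadget `Z'` has vertices `x₁, x₂, y₁, y₂`
with weights `ρ`, `W₁(X) - ρ`, `σ`, `W₁(Y) - σ`, where `2σ < W₁(Y)` and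
`ρ = (W₂(Z) - σ·W₁(X))/(W₁(Y) - 2σ)`. Its independent sets of size two are `{x₁,y₂}` and
`{x₂,y₁}`. Then `W₁(X') = W₁(X)`, `W₁(Y') = W₁(Y)`, and the total weight of independent
sets of size two of `Z'` equals `W₂(Z)`. -/
theorem augment_gadget_equivalent {V : Type*} [DecidableEq V] [Fintype V]
    (w : V → ℚ) (hw : ∀ v, 0 ≤ w v)
    (X Y : Finset V) (hXY : Disjoint X Y)
    (F : Finset (V × V)) (hF : F ⊆ X ×ˢ Y)
    (σ ρ : ℚ) (hσ : 0 ≤ σ)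
    (hσY : 2 * σ < ∑ v ∈ Y, w v)
    (hρ : ρ = ((∑ p ∈ (X ×ˢ Y).filter (fun p => p ∉ F), w p.1 * w p.2) -
        σ * ∑ v ∈ X, w v) / ((∑ v ∈ Y, w v) - 2 * σ)) :
    ρ + ((∑ v ∈ X, w v) - ρ) = ∑ v ∈ X, w v ∧
    σ + ((∑ v ∈ Y, w v) - σ) = ∑ v ∈ Y, w v ∧
    ρ * ((∑ v ∈ Y, w v) - σ) + ((∑ v ∈ X, w v) - ρ) * σ =
      ∑ p ∈ (X ×ˢ Y).filter (fun p => p ∉ F), w p.1 * w p.2 :=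
  augment_gadget_equivalent_general w X Y F σ ρ hσY hρ
end

section
/- Let G* be a bipartite graph with parts V_1, V_2 of sizes n_1, n_2, with edge weights, and let 0 \le k \le min(n_1, n_2). Form G^+ by adding a set V_1' of n_2 - k new vertices complete to V_2 and a set V_2' of n_1 - k new vertices complete to V_1, with all new edges of weight 1. Then the total weight of perfect matchings of G^+ equals (n_1 - k)! (n_2 - k)! times the total weight of matchings of size k in G*. -/
/-!
A perfect matching `e` of `G⁺` has nonzero weight only if every new left vertex is matched into
`V₂`; its weight is then the weight of the matching `S` of `G*` formed by the pairs it matches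
inside `G*`, and counting vertices of `V₂` shows `|S| = k`. The perfect matchings of this kind
inducing a given `k`-matching `S` are exactly the bijections respecting a labelling of the
vertices: each matched vertex of `V₁` labels itself and its partner, the unmatched vertices
of `V₁` share a label with `V₂'`, and `V₁'` shares one with the unmatched vertices of `V₂`.
Such bijections are products of bijections between label classes, so there are
`(n₁ - k)! (n₂ - k)!` of them.
-/

open scoped Classical

/-- The edge-weight matrix of the augmented bipartite graph `G⁺`: the original bipartite
graph `G*` on parts `Fin n₁`, `Fin n₂` with edge weights `w`, together with a set
`V₁' = Fin (n₂ - k)` of new vertices complete to `V₂ = Fin n₂` and a set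
`V₂' = Fin (n₁ - k)` of new vertices complete to `V₁ = Fin n₁`, all new edges having
weight `1` (and no edges between `V₁'` and `V₂'`). -/
def augmentedWeight (n₁ n₂ k : ℕ) (w : Fin n₁ → Fin n₂ → ℚ) :
    (Fin n₁ ⊕ Fin (n₂ - k)) → (Fin n₂ ⊕ Fin (n₁ - k)) → ℚ
  | Sum.inl i, Sum.inl j => w i j
  | Sum.inl _, Sum.inr _ => 1
  | Sum.inr _, Sum.inl _ => 1
  | Sum.inr _, Sum.inr _ => 0

open Finset Sum

namespace Equiv

variable {α β γ : Type*}

def overEquivPiFiber (f : α → γ) (g : β → γ) :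
    {e : α ≃ β // ∀ a, g (e a) = f a} ≃ ∀ c, {a // f a = c} ≃ {b // g b = c} where
  toFun e c := e.1.subtypeEquiv fun a => by rw [e.2 a]
  invFun φ := ⟨ofFiberEquiv φ, ofFiberEquiv_map φ⟩
  left_inv _ := rfl
  right_inv φ := by
    funext c
    ext ⟨a, rfl⟩
    rfl

end Equiv

namespace Fintype

variable {α β γ : Type*} [Fintype α] [Fintype β] [DecidableEq γ] {f : α → γ}
  {g : β → γ}

theorem card_fiber_eq_of_equiv_over (e : α ≃ β) (he : ∀ a, g (e a) = f a) (c : γ) :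
    card {a // f a = c} = card {b // g b = c} :=
  card_congr (Equiv.overEquivPiFiber f g ⟨e, he⟩ c)

theorem card_equiv_over [DecidableEq α] [DecidableEq β] [Fintype γ]
    (h : ∀ c, card {a // f a = c} = card {b // g b = c}) :
    card {e : α ≃ β // ∀ a, g (e a) = f a} = ∏ c, (card {a // f a = c}).factorial := by
  rw [card_congr (Equiv.overEquivPiFiber f g), card_pi]
  exact Finset.prod_congr rfl fun c _ => card_equiv (equivOfCardEq (h c))

end Fintype

variable {α α' β β' : Type*}

def IsMatching (S : Finset (α × β)) : Prop :=
  ∀ p ∈ S, ∀ q ∈ S, p ≠ q → p.1 ≠ q.1 ∧ p.2 ≠ q.2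

namespace IsMatching

variable {S : Finset (α × β)} {a a' : α} {b b' : β}

theorem snd_eq (hS : IsMatching S) (h : (a, b) ∈ S) (h' : (a, b') ∈ S) : b = b' := by
  by_contra hne
  exact (hS _ h _ h' fun he => hne (congrArg Prod.snd he)).1 rfl

theorem fst_eq (hS : IsMatching S) (h : (a, b) ∈ S) (h' : (a', b) ∈ S) : a = a' := by
  by_contra hne
  exact (hS _ h _ h' fun he => hne (congrArg Prod.fst he)).2 rfl

theorem card_fst_mem [Fintype α] (hS : IsMatching S) :
    Fintype.card {a // ∃ b, (a, b) ∈ S} = #S := by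
  rw [Fintype.card_subtype]
  have : ({a | ∃ b, (a, b) ∈ S} : Finset α) = S.image Prod.fst := by ext; simp
  rw [this, card_image_of_injOn]
  intro p hp q hq h
  by_contra hne
  exact (hS p hp q hq hne).1 h

theorem card_snd_mem [Fintype β] (hS : IsMatching S) :
    Fintype.card {b // ∃ a, (a, b) ∈ S} = #S := by
  rw [Fintype.card_subtype]
  have : ({b | ∃ a, (a, b) ∈ S} : Finset β) = S.image Prod.snd := by ext; simp
  rw [this, card_image_of_injOn]
  intro p hp q hq h
  by_contra hne
  exact (hS p hp q hq hne).2 h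

end IsMatching

section MatchedPairs

variable [Fintype α] [Fintype β]

noncomputable def matchedPairs (e : α ⊕ α' ≃ β ⊕ β') : Finset (α × β) :=
  {p | e (inl p.1) = inl p.2}

@[simp]
theorem mem_matchedPairs {e : α ⊕ α' ≃ β ⊕ β'} {p : α × β} :
    p ∈ matchedPairs e ↔ e (inl p.1) = inl p.2 := by
  simp [matchedPairs]

theorem isMatching_matchedPairs (e : α ⊕ α' ≃ β ⊕ β') : IsMatching (matchedPairs e) := by
  rintro ⟨a, b⟩ hp ⟨a', b'⟩ hq hne
  simp only [mem_matchedPairs] at hp hq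
  refine ⟨fun ha => hne ?_, fun hb => hne ?_⟩
  · subst ha
    simpa using hp.symm.trans hq
  · subst hb
    simpa using e.injective (hp.trans hq.symm)

end MatchedPairs

def MapsNewToOld (e : α ⊕ α' ≃ β ⊕ β') : Prop :=
  ∀ x, (e (inr x)).isLeft

-- Labels in `α ⊕ Bool`: `inl a` marks `a` matched by `S` and its partner, `inr false` the
-- unmatched vertices of `α` and all of `β'`, `inr true` all of `α'` and the unmatched vertices
-- of `β`.
noncomputable def leftLabel (S : Finset (α × β)) : α ⊕ α' → α ⊕ Bool
  | inl a => if ∃ b, (a, b) ∈ S then inl a else inr false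
  | inr _ => inr true

noncomputable def rightLabel (S : Finset (α × β)) : β ⊕ β' → α ⊕ Bool
  | inl b => if h : ∃ a, (a, b) ∈ S then inl h.choose else inr true
  | inr _ => inr false

section Labels

variable {S : Finset (α × β)} {a : α} {b : β}

@[simp]
theorem leftLabel_inr (x : α') : leftLabel S (inr x) = inr true := rfl

@[simp]
theorem rightLabel_inr (y : β') : rightLabel S (inr y) = inr false := rfl

theorem leftLabel_inl_of_mem (h : (a, b) ∈ S) : leftLabel (α' := α') S (inl a) = inl a :=
  if_pos ⟨b, h⟩

theorem leftLabel_inl_eq_inr_false :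
    leftLabel (α' := α') S (inl a) = inr false ↔ ¬∃ b, (a, b) ∈ S := by
  simp only [leftLabel]; split_ifs with h <;> simpa using h

theorem leftLabel_inl_ne_inr_true : leftLabel (α' := α') S (inl a) ≠ inr true := by
  simp only [leftLabel]; split_ifs <;> simp

theorem leftLabel_eq_inl_iff {x : α ⊕ α'} :
    leftLabel S x = inl a ↔ x = inl a ∧ ∃ b, (a, b) ∈ S := by
  rcases x with a' | x
  · simp only [leftLabel]
    split_ifs with h
    · simp only [inl.injEq]
      exact ⟨fun he => ⟨he, he ▸ h⟩, And.left⟩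
    · simp only [inl.injEq, false_iff, not_and]
      rintro rfl
      exact h
  · simp

theorem rightLabel_inl_eq_inl (hS : IsMatching S) :
    rightLabel (β' := β') S (inl b) = inl a ↔ (a, b) ∈ S := by
  simp only [rightLabel]
  split_ifs with h
  · exact ⟨fun he => inl_injective he ▸ h.choose_spec,
      fun hab => by rw [hS.fst_eq h.choose_spec hab]⟩
  · simpa using fun hab => h ⟨a, hab⟩

theorem rightLabel_inl_eq_inr_true :
    rightLabel (β' := β') S (inl b) = inr true ↔ ¬∃ a, (a, b) ∈ S := by
  simp only [rightLabel]; split_ifs with h <;> simpa using h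

theorem rightLabel_inl_ne_inr_false : rightLabel (β' := β') S (inl b) ≠ inr false := by
  simp only [rightLabel]; split_ifs <;> simp

theorem rightLabel_eq_inl_iff (hS : IsMatching S) {y : β ⊕ β'} :
    rightLabel S y = inl a ↔ ∃ b, y = inl b ∧ (a, b) ∈ S := by
  rcases y with b | y
  · simp [rightLabel_inl_eq_inl hS]
  · simp

end Labels

theorem mapsNewToOld_and_matchedPairs_eq_iff [Fintype α] [Fintype β] {S : Finset (α × β)}
    (hS : IsMatching S) (e : α ⊕ α' ≃ β ⊕ β') :
    MapsNewToOld e ∧ matchedPairs e = S ↔ ∀ x, rightLabel S (e x) = leftLabel S x := by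
  constructor
  · rintro ⟨hnew, rfl⟩ (a | x)
    · cases h : e (inl a) with
      | inl b =>
        rw [leftLabel_inl_of_mem (b := b) (mem_matchedPairs.2 h), rightLabel_inl_eq_inl hS,
          mem_matchedPairs]
        exact h
      | inr y =>
        rw [rightLabel_inr, eq_comm, leftLabel_inl_eq_inr_false]
        simp [h]
    · obtain ⟨b, hb⟩ := isLeft_iff.1 (hnew x)
      rw [hb, leftLabel_inr, rightLabel_inl_eq_inr_true]
      rintro ⟨a, ha⟩
      simpa using e.injective ((mem_matchedPairs.1 ha).trans hb.symm)
  · intro h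
    refine ⟨fun x => ?_, ?_⟩
    · have hx := h (inr x)
      cases hy : e (inr x) <;> simp_all
    ext ⟨a, b⟩
    rw [mem_matchedPairs]
    have ha := h (inl a)
    constructor
    · intro hab
      rw [hab] at ha
      by_cases hm : ∃ b', (a, b') ∈ S
      · rwa [leftLabel_inl_of_mem hm.choose_spec, rightLabel_inl_eq_inl hS] at ha
      · rw [← leftLabel_inl_eq_inr_false (α' := α')] at hm
        exact absurd (ha.trans hm) rightLabel_inl_ne_inr_false
    · intro hab
      rw [leftLabel_inl_of_mem hab] at ha
      cases hy : e (inl a) with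
      | inl b' =>
        rw [hy, rightLabel_inl_eq_inl hS] at ha
        rw [hS.snd_eq ha hab]
      | inr y => simp [hy] at ha

section Fibers

variable {S : Finset (α × β)}

theorem card_leftLabel_eq_inl_le_one [Fintype α] [Fintype α'] (a : α) :
    Fintype.card {x : α ⊕ α' // leftLabel S x = inl a} ≤ 1 :=
  Fintype.card_le_one_iff_subsingleton.2 ⟨fun x y => Subtype.ext <|
    (leftLabel_eq_inl_iff.1 x.2).1.trans (leftLabel_eq_inl_iff.1 y.2).1.symm⟩

theorem card_leftLabel_eq_inl [Fintype α] [Fintype α'] [Fintype β] [Fintype β']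
    (hS : IsMatching S) (a : α) :
    Fintype.card {x : α ⊕ α' // leftLabel S x = inl a} =
      Fintype.card {y : β ⊕ β' // rightLabel S y = inl a} := by
  have hY : Fintype.card {y : β ⊕ β' // rightLabel S y = inl a} ≤ 1 := by
    refine Fintype.card_le_one_iff_subsingleton.2 ⟨fun ⟨y, hy⟩ ⟨y', hy'⟩ => ?_⟩
    obtain ⟨b, rfl, hb⟩ := (rightLabel_eq_inl_iff hS).1 hy
    obtain ⟨b', rfl, hb'⟩ := (rightLabel_eq_inl_iff hS).1 hy'
    exact Subtype.ext (congrArg inl (hS.snd_eq hb hb'))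
  have hpos : 0 < Fintype.card {x : α ⊕ α' // leftLabel S x = inl a} ↔
      0 < Fintype.card {y : β ⊕ β' // rightLabel S y = inl a} := by
    simp only [Fintype.card_pos_iff, nonempty_subtype, leftLabel_eq_inl_iff,
      rightLabel_eq_inl_iff hS]
    constructor
    · rintro ⟨_, -, b, hb⟩
      exact ⟨inl b, b, rfl, hb⟩
    · rintro ⟨_, b, -, hb⟩
      exact ⟨inl a, rfl, b, hb⟩
  have := card_leftLabel_eq_inl_le_one (α' := α') (S := S) a
  omega

theorem card_leftLabel_eq_inr_true [Fintype α] [Fintype α'] :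
    Fintype.card {x : α ⊕ α' // leftLabel S x = inr true} = Fintype.card α' := by
  rw [Fintype.card_congr Equiv.subtypeSum, Fintype.card_sum]
  simp [leftLabel_inl_ne_inr_true]

theorem card_rightLabel_eq_inr_false [Fintype β] [Fintype β'] :
    Fintype.card {y : β ⊕ β' // rightLabel S y = inr false} = Fintype.card β' := by
  rw [Fintype.card_congr Equiv.subtypeSum, Fintype.card_sum]
  simp [rightLabel_inl_ne_inr_false]

theorem card_leftLabel_eq_inr_false_add [Fintype α] [Fintype α'] (hS : IsMatching S) :
    Fintype.card {x : α ⊕ α' // leftLabel S x = inr false} + #S = Fintype.card α := by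
  rw [Fintype.card_congr Equiv.subtypeSum, Fintype.card_sum]
  simp only [leftLabel_inl_eq_inr_false, leftLabel_inr, inr.injEq, Bool.true_eq_false,
    Fintype.card_of_isEmpty, add_zero]
  have := hS.card_fst_mem ▸ Fintype.card_subtype_le fun a => ∃ b, (a, b) ∈ S
  rw [Fintype.card_subtype_compl, hS.card_fst_mem]
  omega

theorem card_rightLabel_eq_inr_true_add [Fintype β] [Fintype β'] (hS : IsMatching S) :
    Fintype.card {y : β ⊕ β' // rightLabel S y = inr true} + #S = Fintype.card β := by
  rw [Fintype.card_congr Equiv.subtypeSum, Fintype.card_sum]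
  simp only [rightLabel_inl_eq_inr_true, rightLabel_inr, inr.injEq, Bool.false_eq_true,
    Fintype.card_of_isEmpty, add_zero]
  have := hS.card_snd_mem ▸ Fintype.card_subtype_le fun b => ∃ a, (a, b) ∈ S
  rw [Fintype.card_subtype_compl, hS.card_snd_mem]
  omega

end Fibers

theorem card_mapsNewToOld_and_matchedPairs_eq [Fintype α] [Fintype α'] [Fintype β]
    [Fintype β'] {S : Finset (α × β)} (hS : IsMatching S)
    (hα : #S + Fintype.card β' = Fintype.card α)
    (hβ : #S + Fintype.card α' = Fintype.card β) :
    Nat.card {e : α ⊕ α' ≃ β ⊕ β' // MapsNewToOld e ∧ matchedPairs e = S} =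
      (Fintype.card β').factorial * (Fintype.card α').factorial := by
  have hold := card_leftLabel_eq_inr_false_add (α' := α') hS
  have hnew := card_rightLabel_eq_inr_true_add (β' := β') hS
  have hfiber : ∀ c, Fintype.card {x : α ⊕ α' // leftLabel S x = c} =
      Fintype.card {y : β ⊕ β' // rightLabel S y = c} := by
    rintro (a | _ | _)
    · exact card_leftLabel_eq_inl hS a
    · rw [card_rightLabel_eq_inr_false]; omega
    · rw [card_leftLabel_eq_inr_true]; omega
  have hunmatched :
      Fintype.card {x : α ⊕ α' // leftLabel S x = inr false} = Fintype.card β' := by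
    omega
  rw [Nat.card_congr (Equiv.subtypeEquivRight (mapsNewToOld_and_matchedPairs_eq_iff hS)),
    Nat.card_eq_fintype_card, Fintype.card_equiv_over hfiber, Fintype.prod_sum_type,
    Fintype.prod_bool, card_leftLabel_eq_inr_true, hunmatched,
    prod_eq_one fun a _ => Nat.factorial_eq_one.2 (card_leftLabel_eq_inl_le_one a), one_mul,
    mul_comm]

theorem card_matchedPairs_add_card [Fintype α] [Fintype α'] [Fintype β] [Fintype β']
    {e : α ⊕ α' ≃ β ⊕ β'} (he : MapsNewToOld e) :
    #(matchedPairs e) + Fintype.card α' = Fintype.card β := by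
  have hS := isMatching_matchedPairs e
  have hlabel := (mapsNewToOld_and_matchedPairs_eq_iff hS e).1 ⟨he, rfl⟩
  rw [← card_rightLabel_eq_inr_true_add (β' := β') hS,
    ← card_leftLabel_eq_inr_true (α := α) (S := matchedPairs e),
    Fintype.card_fiber_eq_of_equiv_over e hlabel, add_comm]

theorem prod_augmentedWeight {n₁ n₂ k : ℕ} (w : Fin n₁ → Fin n₂ → ℚ)
    (e : (Fin n₁ ⊕ Fin (n₂ - k)) ≃ (Fin n₂ ⊕ Fin (n₁ - k))) :
    ∏ x, augmentedWeight n₁ n₂ k w x (e x) =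
      if MapsNewToOld e then ∏ p ∈ matchedPairs e, w p.1 p.2 else 0 := by
  have hold : ∏ i, augmentedWeight n₁ n₂ k w (inl i) (e (inl i)) =
      ∏ p ∈ matchedPairs e, w p.1 p.2 := by
    rw [matchedPairs, prod_filter, Fintype.prod_prod_type]
    refine prod_congr rfl fun i _ => ?_
    cases h : e (inl i) <;> simp [augmentedWeight, h]
  have hnew : ∏ x, augmentedWeight n₁ n₂ k w (inr x) (e (inr x)) =
      if MapsNewToOld e then 1 else 0 := by
    calc ∏ x, augmentedWeight n₁ n₂ k w (inr x) (e (inr x))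
        = ∏ x, if (e (inr x)).isLeft then (1 : ℚ) else 0 :=
          Fintype.prod_congr _ _ fun x => by cases e (inr x) <;> rfl
      _ = _ := by rw [Fintype.prod_boole]; congr
  rw [Fintype.prod_sum_type, hold, hnew, mul_ite, mul_one, mul_zero]

theorem permanent_eq_factorial_mul_kMatchings_general
    (n₁ n₂ k : ℕ) (hk₁ : k ≤ n₁) (hk₂ : k ≤ n₂)
    (w : Fin n₁ → Fin n₂ → ℚ) :
    (∑ e : (Fin n₁ ⊕ Fin (n₂ - k)) ≃ (Fin n₂ ⊕ Fin (n₁ - k)),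
        ∏ a, augmentedWeight n₁ n₂ k w a (e a)) =
      ((n₁ - k).factorial : ℚ) * ((n₂ - k).factorial : ℚ) *
        ∑ S ∈ Finset.univ.filter
            (fun S : Finset (Fin n₁ × Fin n₂) =>
              S.card = k ∧ ∀ p ∈ S, ∀ q ∈ S, p ≠ q → p.1 ≠ q.1 ∧ p.2 ≠ q.2),
          ∏ p ∈ S, w p.1 p.2 := by
  simp only [prod_augmentedWeight]
  rw [← sum_filter, mul_sum]
  refine (sum_fiberwise_of_maps_to (g := matchedPairs) ?_ _).symm.trans
    (sum_congr rfl fun S hS => ?_)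
  · intro e he
    have := card_matchedPairs_add_card (mem_filter.1 he).2
    simp only [Fintype.card_fin] at this
    exact mem_filter.2 ⟨mem_univ _, by omega, isMatching_matchedPairs e⟩
  obtain ⟨hcard, hS⟩ := (mem_filter.1 hS).2
  rw [sum_congr rfl fun e he => by rw [(mem_filter.1 he).2], sum_const, filter_filter,
    ← Fintype.card_subtype, ← Nat.card_eq_fintype_card,
    card_mapsNewToOld_and_matchedPairs_eq hS (by simp only [Fintype.card_fin]; omega)
      (by simp only [Fintype.card_fin]; omega)]
  simp [nsmul_eq_mul]

/-- The total weight of perfect matchings of `G⁺` (a permanent) equals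
`(n₁ - k)! (n₂ - k)!` times the total weight of matchings of size `k` in the weighted
bipartite graph `G*`. A matching of size `k` in `G*` is a set of `k` pairs with pairwise
distinct first coordinates and pairwise distinct second coordinates; a perfect matching of
`G⁺` is a bijection between its two (equal-sized) parts, weighted by the product of the
weights of its edges. -/
theorem permanent_eq_factorial_mul_kMatchings
    (n₁ n₂ k : ℕ) (hk₁ : k ≤ n₁) (hk₂ : k ≤ n₂)
    (w : Fin n₁ → Fin n₂ → ℚ) (hw : ∀ i j, 0 ≤ w i j) :
    (∑ e : (Fin n₁ ⊕ Fin (n₂ - k)) ≃ (Fin n₂ ⊕ Fin (n₁ - k)),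
        ∏ a, augmentedWeight n₁ n₂ k w a (e a)) =
      ((n₁ - k).factorial : ℚ) * ((n₂ - k).factorial : ℚ) *
        ∑ S ∈ Finset.univ.filter
            (fun S : Finset (Fin n₁ × Fin n₂) =>
              S.card = k ∧ ∀ p ∈ S, ∀ q ∈ S, p ≠ q → p.1 ≠ q.1 ∧ p.2 ≠ q.2),
          ∏ p ∈ S, w p.1 p.2 :=
  permanent_eq_factorial_mul_kMatchings_general n₁ n₂ k hk₁ hk₂ w
end

section
/- Let G be a fork-free graph containing an induced copy of one of the graphs H_1,...,H_5, and let v be a vertex with H an induced subgraph of G restricted to the non-neighbours of v (excluding v). If W is a maximal set of vertices in V \setminus N[v] satisfying: V(H) \subseteq W, G[W] is connected, the complement of G[W] is connected, Z (the neighbours of v complete to H) is complete to W, and Y = N(v) \setminus Z is anticomplete to W; and if some vertex u \notin W \cup {v} distinguishes W with u non-adjacent to v, and u has a non-neighbour z \in Z, then G contains an induced fork. (Key claim within the proof of Theorem 4 of the paper: Z must be complete to W \cup {u}.) -/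
/-- The fork: the 5-vertex tree obtained from the claw `K_{1,3}` by subdividing one edge.
Vertex `1` is adjacent to `0, 2, 3`, and `3` is adjacent to `4`. -/
def forkGraph : SimpleGraph (Fin 5) :=
  SimpleGraph.fromRel (fun a b => (a, b) ∈ ([(0,1),(1,2),(1,3),(3,4)] : List (Fin 5 × Fin 5)))

/-- The graph `H₁` of Lozin–Milanič (Fig. 8). -/
def LMH₁ : SimpleGraph (Fin 6) :=
  SimpleGraph.fromRel (fun a b =>
    (a, b) ∈ ([(0,2),(2,4),(2,3),(0,1),(1,3),(3,5),(5,4)] : List (Fin 6 × Fin 6)))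

/-- The graph `H₂` of Lozin–Milanič. -/
def LMH₂ : SimpleGraph (Fin 6) :=
  SimpleGraph.fromRel (fun a b =>
    (a, b) ∈ ([(0,2),(2,4),(2,3),(0,1),(1,3),(3,5),(5,4),(1,5)] : List (Fin 6 × Fin 6)))

/-- The graph `H₃` of Lozin–Milanič. -/
def LMH₃ : SimpleGraph (Fin 6) :=
  SimpleGraph.fromRel (fun a b =>
    (a, b) ∈ ([(0,2),(2,4),(2,3),(0,1),(1,3),(3,5),(5,4),(1,2)] : List (Fin 6 × Fin 6)))

/-- The graph `H₄` of Lozin–Milanič. -/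
def LMH₄ : SimpleGraph (Fin 6) :=
  SimpleGraph.fromRel (fun a b =>
    (a, b) ∈ ([(0,2),(2,4),(2,3),(0,1),(1,3),(3,5),(5,4),(1,5),(1,2)] : List (Fin 6 × Fin 6)))

/-- The graph `H₅` of Lozin–Milanič. -/
def LMH₅ : SimpleGraph (Fin 7) :=
  SimpleGraph.fromRel (fun a b =>
    (a, b) ∈ ([(0,2),(2,4),(2,3),(0,1),(1,3),(3,5),(5,4),(1,5),(1,2),(1,6),(6,5),(5,2)] :
      List (Fin 7 × Fin 7)))

/-- `s` is the vertex set of an induced copy of one of `H₁, …, H₅` in `G`. -/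
def IsOneOfH {V : Type*} (G : SimpleGraph V) (s : Set V) : Prop :=
  (∃ φ : LMH₁ ↪g G, Set.range φ = s) ∨ (∃ φ : LMH₂ ↪g G, Set.range φ = s) ∨
  (∃ φ : LMH₃ ↪g G, Set.range φ = s) ∨ (∃ φ : LMH₄ ↪g G, Set.range φ = s) ∨
  (∃ φ : LMH₅ ↪g G, Set.range φ = s)

/-!
The fork is `v – z – t`, `z – x – u`: since `G[W]` has a connected complement and `u` distinguishes
`W`, some non-edge `x t` of `G[W]` has `x` adjacent and `t` non-adjacent to `u`. As `z ∈ Z` is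
complete to `W` and adjacent to `v`, while `v` misses `W ∪ {u}` and `u` misses `z`, the vertices
`v, z, t, x, u` induce a fork centred at `z`.
-/

namespace SimpleGraph

variable {V : Type*} {G : SimpleGraph V}

/-- The fork `a – b – c`, `b – d – e`; only the twins `a` and `c` need to be assumed distinct. -/
def forkEmbedding {a b c d e : V} (hac : a ≠ c) (hab : G.Adj a b) (hbc : G.Adj b c)
    (hbd : G.Adj b d) (hde : G.Adj d e) (hac' : ¬G.Adj a c) (had : ¬G.Adj a d)
    (hae : ¬G.Adj a e) (hbe : ¬G.Adj b e) (hcd : ¬G.Adj c d) (hce : ¬G.Adj c e) :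
    forkGraph ↪g G where
  toFun := ![a, b, c, d, e]
  inj' := by
    intro i j hij
    fin_cases i <;> fin_cases j <;> simp at hij ⊢ <;> subst_vars <;> simp_all [G.adj_comm]
  map_rel_iff' := by
    intro i j
    change G.Adj (![a, b, c, d, e] i) (![a, b, c, d, e] j) ↔ _
    fin_cases i <;> fin_cases j <;> simp [forkGraph, G.adj_comm, *]

def Distinguishes (G : SimpleGraph V) (u : V) (W : Set V) : Prop :=
  (∃ x ∈ W, G.Adj u x) ∧ ∃ x ∈ W, ¬G.Adj u x

theorem Distinguishes.exists_nonadj {u : V} {W : Set V} (hu : G.Distinguishes u W)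
    (hW : (G.induce W)ᶜ.Preconnected) :
    ∃ x ∈ W, ∃ t ∈ W, ¬G.Adj x t ∧ G.Adj u x ∧ ¬G.Adj u t := by
  obtain ⟨⟨x, hxW, hux⟩, t, htW, hut⟩ := hu
  obtain ⟨p⟩ := hW ⟨x, hxW⟩ ⟨t, htW⟩
  obtain ⟨d, -, hd₁, hd₂⟩ := p.exists_boundary_dart {y | G.Adj u y} hux hut
  exact ⟨d.fst, d.fst.2, d.snd, d.snd.2, (compl_adj _ _ _).mp d.adj |>.2, hd₁, hd₂⟩

end SimpleGraph

open SimpleGraph in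
theorem fork_from_nonneighbour_in_Z_general {V : Type*} (G : SimpleGraph V) (v : V) (s : Set V)
    (Z : Set V)
    (hZ : Z = {z | G.Adj v z ∧ ∀ x ∈ s, G.Adj z x})
    (W : Set V)
    (hWv : W ⊆ {x | x ≠ v ∧ ¬ G.Adj v x})
    (hW3 : ((G.induce W)ᶜ).Connected)
    (hW4 : ∀ z ∈ Z, ∀ x ∈ W, G.Adj z x)
    (u : V) (huvadj : ¬ G.Adj u v)
    (hdist : (∃ x ∈ W, G.Adj u x) ∧ (∃ x ∈ W, ¬ G.Adj u x))
    (z : V) (hz : z ∈ Z) (huz : ¬ G.Adj u z) :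
    Nonempty (forkGraph ↪g G) := by
  obtain ⟨x, hxW, t, htW, hxt, hux, hut⟩ := Distinguishes.exists_nonadj hdist hW3.preconnected
  have hvz : G.Adj v z := (hZ ▸ hz).1
  exact ⟨forkEmbedding (hWv htW).1.symm hvz (hW4 z hz t htW) (hW4 z hz x hxW) hux.symm
    (hWv htW).2 (hWv hxW).2 (fun h => huvadj h.symm) (fun h => huz h.symm) (fun h => hxt h.symm)
    (fun h => hut h.symm)⟩

/-- Key claim inside the proof of Theorem 4 of the paper. Let `G` be fork-free, `v` a
vertex, and `s = V(H)` the vertex set of an induced copy of one of `H₁, …, H₅` contained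
in the non-neighbours of `v`. Let `W` be a maximal set of non-neighbours of `v` such that
`V(H) ⊆ W`, `G[W]` and its complement are connected, `Z` (the neighbours of `v` complete
to `H`) is complete to `W`, and `Y = N(v) \ Z` is anticomplete to `W`. If some vertex
`u ∉ W ∪ {v}`, non-adjacent to `v`, distinguishes `W` and has a non-neighbour `z ∈ Z`,
then `G` contains an induced fork. -/
theorem fork_from_nonneighbour_in_Z {V : Type*} (G : SimpleGraph V)
    (hfree : IsEmpty (forkGraph ↪g G)) (v : V)
    (s : Set V) (hs : IsOneOfH G s)
    (hsv : s ⊆ {x | x ≠ v ∧ ¬ G.Adj v x})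
    (Z Y : Set V)
    (hZ : Z = {z | G.Adj v z ∧ ∀ x ∈ s, G.Adj z x})
    (hY : Y = G.neighborSet v \ Z)
    (W : Set V)
    (hWv : W ⊆ {x | x ≠ v ∧ ¬ G.Adj v x})
    (hW1 : s ⊆ W)
    (hW2 : (G.induce W).Connected)
    (hW3 : ((G.induce W)ᶜ).Connected)
    (hW4 : ∀ z ∈ Z, ∀ x ∈ W, G.Adj z x)
    (hW5 : ∀ y ∈ Y, ∀ x ∈ W, ¬ G.Adj y x)
    (hWmax : ∀ W' : Set V, W ⊆ W' → W' ⊆ {x | x ≠ v ∧ ¬ G.Adj v x} → s ⊆ W' →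
      (G.induce W').Connected → ((G.induce W')ᶜ).Connected →
      (∀ z ∈ Z, ∀ x ∈ W', G.Adj z x) → (∀ y ∈ Y, ∀ x ∈ W', ¬ G.Adj y x) → W' = W)
    (u : V) (hu : u ∉ W) (huv : u ≠ v) (huvadj : ¬ G.Adj u v)
    (hdist : (∃ x ∈ W, G.Adj u x) ∧ (∃ x ∈ W, ¬ G.Adj u x))
    (z : V) (hz : z ∈ Z) (huz : ¬ G.Adj u z) :
    Nonempty (forkGraph ↪g G) :=
  fork_from_nonneighbour_in_Z_general G v s Z hZ W hWv hW3 hW4 u huvadj hdist z hz huz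
end
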